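/- Let q be a prime power, A ∈ GL₂(F_q) with [A] ≠ [I], let D be the order of [A] in PGL₂(F_q), and let m ≥ 1 with Dm > 2. Then a monic irreducible polynomial f ∈ F_q[x] of degree Dm satisfies [A]∘f = f if and only if f divides F_{A^j,m} for some integer j with 1 ≤ j ≤ D−1 and gcd(j,D) = 1. -/

import Mathlib

open Polynomial

noncomputable section

namespace PGLAct

variable {F : Type} [Field F]

/-- The composition `A ∘ f = ∑ aᵢ (a x + c)^i (b x + d)^{k-i}` for `A = [[a,b],[c,d]]`. -/
def mcirc (A : Matrix (Fin 2) (Fin 2) F) (f : F[X]) : F[X] :=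
  ∑ i ∈ Finset.range (f.natDegree + 1),
    C (f.coeff i) * (C (A 0 0) * X + C (A 1 0)) ^ i *
      (C (A 0 1) * X + C (A 1 1)) ^ (f.natDegree - i)

/-- The composition `[A] ∘ f`: the monic normalization of `A ∘ f`. -/
def pcirc (A : Matrix (Fin 2) (Fin 2) F) (f : F[X]) : F[X] :=
  C (mcirc A f).leadingCoeff⁻¹ * mcirc A f

/-- The subgroup of scalar matrices in `GL₂(F)`. -/
def scalarSub (F : Type) [Field F] : Subgroup (GL (Fin 2) F) :=
  (Units.map ((Matrix.scalar (Fin 2)).toMonoidHom : F →* Matrix (Fin 2) (Fin 2) F)).range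

instance scalarSub_normal (F : Type) [Field F] : (scalarSub F).Normal := by
  constructor
  intro n hn g
  obtain ⟨u, hu⟩ := hn
  refine ⟨u, ?_⟩
  ext : 1
  have hcomm : Commute ((Matrix.scalar (Fin 2)) (u : F)) (g : Matrix (Fin 2) (Fin 2) F) :=
    Matrix.scalar_commute _ (fun r' => Commute.all _ r') _
  have hval : (n : Matrix (Fin 2) (Fin 2) F) = (Matrix.scalar (Fin 2)) (u : F) := by
    rw [← hu]; rfl
  calc ((Units.map ((Matrix.scalar (Fin 2)).toMonoidHom : F →* Matrix (Fin 2) (Fin 2) F)) u :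
        GL (Fin 2) F).val
      = (Matrix.scalar (Fin 2)) (u : F) := rfl
    _ = (g : Matrix (Fin 2) (Fin 2) F) * (Matrix.scalar (Fin 2)) (u : F)
        * ((g⁻¹ : GL (Fin 2) F) : Matrix (Fin 2) (Fin 2) F) := by
        rw [← hcomm.eq, mul_assoc, ← Units.val_mul, mul_inv_cancel]
        simp
    _ = ((g * n * g⁻¹ : GL (Fin 2) F) : Matrix (Fin 2) (Fin 2) F) := by
        simp [Units.val_mul, hval]

/-- `PGL₂(F)`, the projective general linear group. -/
def PGL2 (F : Type) [Field F] : Type := GL (Fin 2) F ⧸ scalarSub F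

instance : Group (PGL2 F) := inferInstanceAs (Group (GL (Fin 2) F ⧸ scalarSub F))

/-- The natural projection `GL₂(F) → PGL₂(F)`, `A ↦ [A]`. -/
def toPGL (F : Type) [Field F] : GL (Fin 2) F →* PGL2 F := QuotientGroup.mk' (scalarSub F)

/-- The polynomial `F_{A,r} = b x^{q^r+1} - a x^{q^r} + d x - c`. -/
def FAr [Fintype F] (A : Matrix (Fin 2) (Fin 2) F) (r : ℕ) : F[X] :=
  C (A 0 1) * X ^ (Fintype.card F ^ r + 1) - C (A 0 0) * X ^ (Fintype.card F ^ r)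
    + C (A 1 1) * X - C (A 1 0)


/-- The σ-product of `A = [[a,b],[c,d]]` and `A₀ = [[a₀,b₀],[c₀,d₀]]`. -/
def sigmaProd (A A0 : Matrix (Fin 2) (Fin 2) F) : Matrix (Fin 2) (Fin 2) F :=
  !![-(A 0 1 * (A0 0 0 * A0 1 0) - A 0 0 * (A0 0 0 * A0 1 1) + A 1 1 * (A0 1 0 * A0 0 1)
        - A 1 0 * (A0 0 1 * A0 1 1)),
     A 0 1 * A0 0 0 ^ 2 - A 0 0 * (A0 0 0 * A0 0 1) + A 1 1 * (A0 0 0 * A0 0 1)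
        - A 1 0 * A0 0 1 ^ 2;
     -(A 0 1 * A0 1 0 ^ 2 - A 0 0 * (A0 1 0 * A0 1 1) + A 1 1 * (A0 1 1 * A0 1 0)
        - A 1 0 * A0 1 1 ^ 2),
     A 0 1 * (A0 0 0 * A0 1 0) - A 0 0 * (A0 1 0 * A0 0 1) + A 1 1 * (A0 1 1 * A0 0 0)
        - A 1 0 * (A0 0 1 * A0 1 1)]

end PGLAct

/-!
Let `α` be a root of `f` in `K = F[x]/(f)` and `σ` the `q`-power Frobenius of `K`, of order
`n = deg f`. Since `A ∘ f = (b x + d)^n f((a x + c)/(b x + d))` and `f` has no root in `F`,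
`[A]` fixes `f` iff the Möbius image `A·α` is a conjugate `σ^s α`. The exponent `s` is unique
mod `n` and adds up along products; as `α` has degree at least `3`, `A·α = α` forces `[A] = 1`.
Hence `[A] ↦ s` embeds the stabiliser of `f` into `ℤ/n`, so `[A]` has order `D = n/m` exactly when
`s = m t` with `gcd(t, D) = 1`. Finally `f ∣ F_{B,t}` says `B·α = σ^(-t) α`, so choosing
`t j ≡ -1 (mod D)` gives the divisibility for `A^j`; conversely `[A]` is a power of `[A^j]`.
-/

theorem Nat.exists_eq_mul_coprime_of_dvd_mul_iff {D m r : ℕ} (hD : 0 < D)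
    (h : ∀ k, D * m ∣ r * k ↔ D ∣ k) : ∃ t, r = m * t ∧ t.Coprime D := by
  obtain ⟨t, rfl⟩ : m ∣ r :=
    Nat.dvd_of_mul_dvd_mul_left hD (by rw [mul_comm D r]; exact (h D).2 dvd_rfl)
  refine ⟨t, rfl, ?_⟩
  have ht : ∀ k, D ∣ t * k → D ∣ k := fun k hk =>
    (h k).1 (by rw [mul_assoc, mul_comm D m]; exact Nat.mul_dvd_mul_left m hk)
  obtain ⟨t', ht'⟩ := Nat.gcd_dvd_left t D
  obtain ⟨D', hD'⟩ := Nat.gcd_dvd_right t D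
  have htD' : t * D' = D * t' := calc
    t * D' = t.gcd D * t' * D' := by rw [← ht']
    _ = t' * (t.gcd D * D') := by ring
    _ = D * t' := by rw [← hD', mul_comm]
  have hD'pos : 0 < D' := Nat.pos_of_ne_zero (by rintro rfl; omega)
  have := Nat.le_of_dvd hD'pos (ht D' ⟨t', htD'⟩)
  have := Nat.gcd_pos_of_pos_right t hD
  nlinarith

theorem Nat.exists_coprime_mul_add_one_dvd {t D : ℕ} (hD : 1 < D) (ht : t.Coprime D) :
    ∃ j, 1 ≤ j ∧ j ≤ D - 1 ∧ j.Coprime D ∧ D ∣ t * j + 1 := by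
  obtain ⟨j, hjD, hj⟩ := Nat.exists_mul_mod_eq_of_coprime (D - 1) ht (by omega)
  have hdvd : D ∣ t * j + 1 := by
    refine Nat.modEq_zero_iff_dvd.1 ((Nat.ModEq.add_right 1 hj).trans ?_)
    rw [Nat.sub_add_cancel hD.le, Nat.ModEq, Nat.mod_self, Nat.zero_mod]
  have hj0 : j ≠ 0 := by
    rintro rfl
    rw [mul_zero, Nat.zero_mod, Nat.mod_eq_of_lt (by omega)] at hj
    omega
  refine ⟨j, by omega, by omega, Nat.eq_one_of_dvd_one ?_, hdvd⟩
  exact (Nat.dvd_add_right (dvd_mul_of_dvd_right (Nat.gcd_dvd_left j D) t)).1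
    ((Nat.gcd_dvd_right j D).trans hdvd)

namespace PGLAct

section Composition

variable {F : Type} [Field F]

/-- For `A = [[a,b],[c,d]]`, `A ∘ f = (b x + d)^k f((a x + c)/(b x + d))`: `A` acts through the
Möbius map `x ↦ (a x + c)/(b x + d)`, with numerator `moebiusNum A` and denominator
`moebiusDen A`. -/
def moebiusNum {L : Type*} [Field L] [Algebra F L] (M : Matrix (Fin 2) (Fin 2) F) (x : L) : L :=
  algebraMap F L (M 0 0) * x + algebraMap F L (M 1 0)

def moebiusDen {L : Type*} [Field L] [Algebra F L] (M : Matrix (Fin 2) (Fin 2) F) (x : L) : L :=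
  algebraMap F L (M 0 1) * x + algebraMap F L (M 1 1)

theorem natDegree_mcirc_le (M : Matrix (Fin 2) (Fin 2) F) (f : F[X]) :
    (mcirc M f).natDegree ≤ f.natDegree := by
  refine natDegree_sum_le_of_forall_le _ _ fun i hi => ?_
  have hi : i ≤ f.natDegree := Nat.lt_succ_iff.mp (Finset.mem_range.mp hi)
  calc _ ≤ 0 + i * 1 + (f.natDegree - i) * 1 :=
        natDegree_mul_le_of_le
          (natDegree_mul_le_of_le (natDegree_C _).le (natDegree_pow_le_of_le _ natDegree_linear_le))
          (natDegree_pow_le_of_le _ natDegree_linear_le)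
    _ = f.natDegree := by omega

theorem aeval_mcirc {L : Type*} [Field L] [Algebra F L] (M : Matrix (Fin 2) (Fin 2) F) (f : F[X])
    {x : L} (hx : moebiusDen M x ≠ 0) :
    aeval x (mcirc M f) =
      moebiusDen M x ^ f.natDegree * aeval (moebiusNum M x / moebiusDen M x) f := by
  simp only [mcirc, map_sum, map_mul, map_pow, map_add, aeval_C, aeval_X,
    aeval_eq_sum_range (p := f), Finset.mul_sum]
  refine Finset.sum_congr rfl fun i hi => ?_
  obtain ⟨k, hk⟩ := Nat.exists_eq_add_of_le (Nat.lt_succ_iff.mp (Finset.mem_range.mp hi))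
  rw [hk, Nat.add_sub_cancel_left, Algebra.smul_def, div_pow]
  field_simp
  simp only [moebiusNum, moebiusDen]
  ring

theorem mcirc_ne_zero (A : GL (Fin 2) F) {f : F[X]} (hf : ∀ x, ¬ f.IsRoot x) :
    mcirc A.val f ≠ 0 := by
  have hdet := Matrix.det_fin_two A.val ▸ A.det_ne_zero
  obtain ⟨x, hx⟩ : ∃ x : F, moebiusDen A.val x ≠ 0 := by
    by_cases hd : A.val 1 1 = 0
    · exact ⟨1, by simpa [moebiusDen, hd] using fun hb => hdet (by simp [hb, hd])⟩
    · exact ⟨0, by simpa [moebiusDen] using hd⟩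
  intro h
  have := aeval_mcirc A.val f hx
  rw [h, map_zero, coe_aeval_eq_eval, eq_comm, mul_eq_zero] at this
  exact this.elim (pow_ne_zero _ hx) (hf _)

theorem pcirc_eq_self_iff_dvd (A : GL (Fin 2) F) {f : F[X]} (hf : f.Monic)
    (hroot : ∀ x, ¬ f.IsRoot x) : pcirc A.val f = f ↔ f ∣ mcirc A.val f := by
  have hdeg := natDegree_mcirc_le A.val f
  have hlc := leadingCoeff_ne_zero.2 (mcirc_ne_zero A hroot)
  rw [pcirc]
  generalize mcirc A.val f = g at hdeg hlc ⊢
  constructor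
  · intro h
    exact h ▸ (isUnit_C.2 (inv_ne_zero hlc).isUnit).mul_left_dvd.2 dvd_rfl
  · intro h
    rw [eq_leadingCoeff_mul_of_monic_of_dvd_of_natDegree_le hf h hdeg, leadingCoeff_mul,
      leadingCoeff_C, hf.leadingCoeff, mul_one, ← mul_assoc, ← C_mul, inv_mul_cancel₀ hlc, C_1,
      one_mul]

end Composition

theorem toPGL_eq_one_iff {F : Type} [Field F] (B : GL (Fin 2) F) :
    toPGL F B = 1 ↔ ∃ u : Fˣ, B.val = Matrix.scalar (Fin 2) (u : F) := by
  refine (QuotientGroup.eq_one_iff B).trans (exists_congr fun u => ?_)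
  rw [eq_comm, Units.ext_iff]
  rfl

section RootOfIrreducible

open AdjoinRoot

variable {F : Type} [Field F] {f : F[X]}

theorem not_isRoot_of_irreducible (hf : Irreducible f) (hn : f.natDegree ≠ 1) (x : F) :
    ¬ f.IsRoot x :=
  fun h => hn (natDegree_eq_of_degree_eq_some (degree_eq_one_of_irreducible_of_root hf h))

variable [Fact (Irreducible f)]

theorem moebiusDen_root_ne_zero (hn : f.natDegree ≠ 1) (B : GL (Fin 2) F) :
    moebiusDen B.val (root f) ≠ 0 := by
  have hdet := Matrix.det_fin_two B.val ▸ B.det_ne_zero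
  intro h
  rw [moebiusDen] at h
  by_cases hb : B.val 0 1 = 0
  · rw [hb, map_zero, zero_mul, zero_add, map_eq_zero_iff _ (algebraMap F _).injective] at h
    exact hdet (by simp [hb, h])
  · refine not_isRoot_of_irreducible Fact.out hn (-B.val 1 1 / B.val 0 1) ?_
    have hα : root f = algebraMap F (AdjoinRoot f) (-B.val 1 1 / B.val 0 1) := by
      rw [map_div₀, map_neg, eq_div_iff (by simpa using hb)]
      linear_combination h
    have hroot : aeval (root f) f = 0 := by rw [aeval_eq, mk_self]
    rwa [hα, aeval_algebraMap_apply, map_eq_zero_iff _ (algebraMap F _).injective] at hroot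

end RootOfIrreducible

section Frobenius

open AdjoinRoot

variable {F : Type} [Field F] [Fintype F] (f : F[X]) [Fact (Irreducible f)]

instance : Module.Finite F (AdjoinRoot f) :=
  (powerBasis (Fact.out : Irreducible f).ne_zero).finite

instance : Finite (AdjoinRoot f) := Module.finite_of_finite F

abbrev frob : Gal(AdjoinRoot f/F) := FiniteField.frobeniusAlgEquivOfAlgebraic F (AdjoinRoot f)

theorem frob_pow_apply (s : ℕ) (x : AdjoinRoot f) : (frob f ^ s) x = x ^ Fintype.card F ^ s := by
  rw [AlgEquiv.coe_pow, FiniteField.coe_frobeniusAlgEquivOfAlgebraic_iterate]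

theorem orderOf_frob : orderOf (frob f) = f.natDegree := by
  have hf0 := (Fact.out : Irreducible f).ne_zero
  rw [FiniteField.orderOf_frobeniusAlgEquivOfAlgebraic, (powerBasis hf0).finrank, powerBasis_dim]

theorem frob_pow_root_eq_iff {s t : ℕ} :
    (frob f ^ s) (root f) = (frob f ^ t) (root f) ↔ s ≡ t [MOD f.natDegree] := by
  rw [← orderOf_frob, ← pow_eq_pow_iff_modEq]
  exact ⟨fun h => AlgEquiv.coe_toAlgHom_injective (algHom_ext h), fun h => h ▸ rfl⟩

theorem exists_frob_pow_root_eq {β : AdjoinRoot f} (hβ : aeval β f = 0) :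
    ∃ s, (frob f ^ s) (root f) = β := by
  obtain ⟨τ, hτ⟩ := minpoly.exists_algEquiv_of_root' (Algebra.IsAlgebraic.isAlgebraic (root f))
    (by rw [minpoly_root (Fact.out : Irreducible f).ne_zero, map_mul, hβ, zero_mul])
  obtain ⟨s, rfl⟩ := (FiniteField.bijective_frobeniusAlgEquivOfAlgebraic_pow F (AdjoinRoot f)).2 τ
  exact ⟨s, hτ⟩

/-- `[B]` moves the root `α` of `f` to its conjugate `α ^ q ^ s`. -/
def ShiftsRoot (B : Matrix (Fin 2) (Fin 2) F) (s : ℕ) : Prop :=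
  moebiusNum B (root f) = (frob f ^ s) (root f) * moebiusDen B (root f)

variable {f}

theorem shiftsRoot_congr {B : Matrix (Fin 2) (Fin 2) F} {s t : ℕ}
    (h : s ≡ t [MOD f.natDegree]) : ShiftsRoot f B s ↔ ShiftsRoot f B t := by
  rw [ShiftsRoot, ShiftsRoot, (frob_pow_root_eq_iff f).2 h]

theorem shiftsRoot_scalar (u : F) : ShiftsRoot f (Matrix.scalar (Fin 2) u) 0 := by
  simp [ShiftsRoot, moebiusNum, moebiusDen, mul_comm]

theorem ShiftsRoot.mul {B B' : Matrix (Fin 2) (Fin 2) F} {s s' : ℕ} (h : ShiftsRoot f B s)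
    (h' : ShiftsRoot f B' s') : ShiftsRoot f (B * B') (s + s') := by
  have h'' := congrArg (frob f ^ s) h'
  simp only [ShiftsRoot, moebiusNum, moebiusDen, map_add, map_mul, AlgEquiv.commutes] at h h'' ⊢
  simp only [pow_add, AlgEquiv.mul_apply, Matrix.mul_apply, Fin.sum_univ_two, map_add, map_mul]
  linear_combination (algebraMap F _ (B' 0 0) - (frob f ^ s) ((frob f ^ s') (root f)) *
    algebraMap F _ (B' 0 1)) * h + (algebraMap F _ (B 0 1) * root f + algebraMap F _ (B 1 1)) * h''

theorem ShiftsRoot.pow {B : GL (Fin 2) F} {s : ℕ} (h : ShiftsRoot f B.val s) (k : ℕ) :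
    ShiftsRoot f (B ^ k).val (s * k) := by
  induction k with
  | zero => simpa using shiftsRoot_scalar (f := f) 1
  | succ k ih =>
    rw [pow_succ, Units.val_mul]
    exact ih.mul h

theorem ShiftsRoot.modEq (hn : f.natDegree ≠ 1) {B : GL (Fin 2) F} {s t : ℕ}
    (hs : ShiftsRoot f B.val s) (ht : ShiftsRoot f B.val t) : s ≡ t [MOD f.natDegree] :=
  (frob_pow_root_eq_iff f).1 (mul_right_cancel₀ (moebiusDen_root_ne_zero hn B) (hs.symm.trans ht))

theorem shiftsRoot_iff_dvd_FAr (B : Matrix (Fin 2) (Fin 2) F) {s t : ℕ}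
    (hst : f.natDegree ∣ s + t) : ShiftsRoot f B s ↔ f ∣ FAr B t := by
  have hσ : frob f ^ s * frob f ^ t = 1 := by
    rw [← pow_add, ← orderOf_dvd_iff_pow_eq_one, orderOf_frob]; exact hst
  have key : (frob f ^ s) (aeval (root f) (FAr B t)) =
      (frob f ^ s) (root f) * moebiusDen B (root f) - moebiusNum B (root f) := by
    have hα : (frob f ^ s) (root f ^ Fintype.card F ^ t) = root f := by
      rw [← frob_pow_apply, ← AlgEquiv.mul_apply, hσ, AlgEquiv.one_apply]
    simp only [FAr, moebiusNum, moebiusDen, map_sub, map_add, map_mul, map_pow, aeval_C, aeval_X,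
      AlgEquiv.commutes, pow_succ, hα]
    ring
  rw [← mk_eq_zero, ← aeval_eq, ← EmbeddingLike.map_eq_zero_iff (f := frob f ^ s), key, sub_eq_zero,
    ShiftsRoot, eq_comm]

theorem shiftsRoot_of_toPGL_eq {B B' : GL (Fin 2) F} (hB : toPGL F B = toPGL F B') {s : ℕ}
    (h : ShiftsRoot f B.val s) : ShiftsRoot f B'.val s := by
  obtain ⟨u, hu⟩ := (toPGL_eq_one_iff (B⁻¹ * B')).1 (by rw [map_mul, map_inv, hB, inv_mul_cancel])
  rw [← mul_inv_cancel_left B B', Units.val_mul, hu]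
  exact h.mul (shiftsRoot_scalar _)

theorem shiftsRoot_zero_iff (hn : 3 ≤ f.natDegree) (B : GL (Fin 2) F) :
    ShiftsRoot f B.val 0 ↔ toPGL F B = 1 := by
  refine ⟨fun h => ?_, fun h => ?_⟩
  · set a := B.val 0 0
    set b := B.val 0 1
    set c := B.val 1 0
    set d := B.val 1 1
    have hq : C b * X ^ 2 + C (d - a) * X + C (-c) = 0 := by
      by_contra hne
      have hdvd : f ∣ C b * X ^ 2 + C (d - a) * X + C (-c) := by
        rw [← mk_eq_zero, ← aeval_eq]
        simp only [ShiftsRoot, moebiusNum, moebiusDen, pow_zero, AlgEquiv.one_apply] at h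
        simp only [map_add, map_mul, map_pow, aeval_C, aeval_X, map_sub, map_neg]
        linear_combination -h
      have := natDegree_le_of_dvd hdvd hne
      have := natDegree_quadratic_le (a := b) (b := d - a) (c := -c)
      omega
    have hb : b = 0 := by simpa using congrArg (coeff · 2) hq
    have hda : d - a = 0 := by simpa using congrArg (coeff · 1) hq
    have hc : c = 0 := by simpa using congrArg (coeff · 0) hq
    have ha : a ≠ 0 := fun ha => B.det_ne_zero (by simp [Matrix.det_fin_two, a, b, ha, hb])
    refine (toPGL_eq_one_iff B).2 ⟨Units.mk0 a ha, ?_⟩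
    ext i j
    fin_cases i <;> fin_cases j <;> simp [a, b, c, d, hb, hc, sub_eq_zero.1 hda]
  · obtain ⟨u, hu⟩ := (toPGL_eq_one_iff B).1 h
    exact hu ▸ shiftsRoot_scalar _

theorem toPGL_pow_eq_one_iff (hn : 3 ≤ f.natDegree) {A : GL (Fin 2) F} {r : ℕ}
    (h : ShiftsRoot f A.val r) (k : ℕ) : toPGL F A ^ k = 1 ↔ f.natDegree ∣ r * k := by
  rw [← map_pow, ← shiftsRoot_zero_iff hn, ← Nat.modEq_zero_iff_dvd]
  exact ⟨(h.pow k).modEq (by omega), fun hr => (shiftsRoot_congr hr).1 (h.pow k)⟩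

theorem pcirc_eq_self_iff_exists_shiftsRoot (hf : f.Monic) (hn : f.natDegree ≠ 1)
    (A : GL (Fin 2) F) : pcirc A.val f = f ↔ ∃ s, ShiftsRoot f A.val s := by
  have hden := moebiusDen_root_ne_zero hn A
  rw [pcirc_eq_self_iff_dvd A hf (not_isRoot_of_irreducible Fact.out hn), ← mk_eq_zero, ← aeval_eq,
    aeval_mcirc _ _ hden, mul_eq_zero, or_iff_right (pow_ne_zero _ hden)]
  constructor
  · intro h
    obtain ⟨s, hs⟩ := exists_frob_pow_root_eq f h
    exact ⟨s, by rw [ShiftsRoot, hs, div_mul_cancel₀ _ hden]⟩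
  · rintro ⟨s, hs⟩
    rw [hs, mul_div_cancel_right₀ _ hden, aeval_algHom_apply, aeval_eq, mk_self, map_zero]

end Frobenius

end PGLAct

theorem invariant_iff_divides_FAr_general {F : Type} [Field F] [Fintype F]
    (A : GL (Fin 2) F) (hA : PGLAct.toPGL F A ≠ 1)
    (D : ℕ) (hD : D = orderOf (PGLAct.toPGL F A))
    (m : ℕ) (hDm : 2 < D * m)
    (f : F[X]) (hf : f.Monic) (hirr : Irreducible f) (hdeg : f.natDegree = D * m) :
    PGLAct.pcirc A.val f = f ↔
      ∃ j : ℕ, 1 ≤ j ∧ j ≤ D - 1 ∧ Nat.gcd j D = 1 ∧ f ∣ PGLAct.FAr ((A ^ j).val) m := by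
  have : Fact (Irreducible f) := ⟨hirr⟩
  have : Finite (PGLAct.PGL2 F) := Quotient.finite _
  have hD0 : 0 < D := hD ▸ orderOf_pos _
  have hD1 : 1 < D := by
    have : D ≠ 1 := fun h => hA (orderOf_eq_one_iff.1 (hD.symm.trans h))
    omega
  rw [PGLAct.pcirc_eq_self_iff_exists_shiftsRoot hf (by omega)]
  constructor
  · rintro ⟨r, hr⟩
    obtain ⟨t, rfl, ht⟩ := Nat.exists_eq_mul_coprime_of_dvd_mul_iff hD0 fun k => by
      rw [← hdeg, ← PGLAct.toPGL_pow_eq_one_iff (by omega) hr, hD, orderOf_dvd_iff_pow_eq_one]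
    obtain ⟨j, hj1, hjD, hjco, hdvd⟩ := Nat.exists_coprime_mul_add_one_dvd hD1 ht
    refine ⟨j, hj1, hjD, hjco, (PGLAct.shiftsRoot_iff_dvd_FAr _ ?_).1 (hr.pow j)⟩
    rw [hdeg, mul_comm D m, mul_assoc, ← Nat.mul_succ]
    exact Nat.mul_dvd_mul_left m hdvd
  · rintro ⟨j, -, -, hjco, hdvd⟩
    obtain ⟨k, hk⟩ := exists_pow_eq_self_of_coprime (x := PGLAct.toPGL F A) (hD ▸ hjco)
    have hs : PGLAct.ShiftsRoot f (A ^ j).val ((D - 1) * m) := by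
      refine (PGLAct.shiftsRoot_iff_dvd_FAr _ ?_).2 hdvd
      rw [← Nat.succ_mul, Nat.succ_eq_add_one, Nat.sub_add_cancel hD0, hdeg]
    refine ⟨_, PGLAct.shiftsRoot_of_toPGL_eq ?_ (hs.pow k)⟩
    rw [map_pow, map_pow, hk]

/-- A monic irreducible `f` of degree `Dm > 2` satisfies `[A]∘f = f` iff `f`
divides `F_{A^j,m}` for some `1 ≤ j ≤ D-1` with `gcd(j,D) = 1`. -/
theorem invariant_iff_divides_FAr {F : Type} [Field F] [Fintype F]
    (A : GL (Fin 2) F) (hA : PGLAct.toPGL F A ≠ 1)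
    (D : ℕ) (hD : D = orderOf (PGLAct.toPGL F A))
    (m : ℕ) (hm : 1 ≤ m) (hDm : 2 < D * m)
    (f : F[X]) (hf : f.Monic) (hirr : Irreducible f) (hdeg : f.natDegree = D * m) :
    PGLAct.pcirc A.val f = f ↔
      ∃ j : ℕ, 1 ≤ j ∧ j ≤ D - 1 ∧ Nat.gcd j D = 1 ∧ f ∣ PGLAct.FAr ((A ^ j).val) m :=
  invariant_iff_divides_FAr_general A hA D hD m hDm f hf hirr hdeg
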